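/- Let G be a graph, let D ⊆ V(G) be a cluster vertex deletion set of G, let C be a connected component of G − D with the maximum number of vertices, and let S be a vi-set of G. Then |S ∖ V(C)| ≤ |D|. -/
import Mathlib


namespace VI

open SimpleGraph

variable {V : Type*}

/-- Total weight of a set of vertices. -/
noncomputable def setWeight (w : V → ℕ) (X : Set V) : ℕ := ∑ᶠ v ∈ X, w v

/-- Maximum weight of a connected component of `G − S`. -/
noncomputable def compMax (G : SimpleGraph V) (w : V → ℕ) (S : Set V) : ℕ :=
  sSup {n | ∃ C : (G.induce Sᶜ).ConnectedComponent, n = setWeight w (Subtype.val '' C.supp)}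

/-- `w(S) + max_{C ∈ cc(G−S)} w(V(C))`. -/
noncomputable def viCost (G : SimpleGraph V) (w : V → ℕ) (S : Set V) : ℕ :=
  setWeight w S + compMax G w S

/-- The weighted vertex integrity of `G`. -/
noncomputable def wvi (G : SimpleGraph V) (w : V → ℕ) : ℕ := ⨅ S : Set V, viCost G w S

/-- Maximum number of vertices of a connected component of `G − S`. -/
noncomputable def uCompMax (G : SimpleGraph V) (S : Set V) : ℕ :=
  sSup {n | ∃ C : (G.induce Sᶜ).ConnectedComponent, n = C.supp.ncard}

/-- `|S| + max_{C ∈ cc(G−S)} |V(C)|`. -/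
noncomputable def uViCost (G : SimpleGraph V) (S : Set V) : ℕ := S.ncard + uCompMax G S

/-- The (unweighted) vertex integrity of `G`. -/
noncomputable def uvi (G : SimpleGraph V) : ℕ := ⨅ S : Set V, uViCost G S

/-- A vertex `v` is redundant w.r.t. `S` if at most one connected component of `G − S`
contains a neighbor of `v`. -/
def Redundant (G : SimpleGraph V) (S : Set V) (v : V) : Prop :=
  {C : (G.induce Sᶜ).ConnectedComponent | ∃ u : (Sᶜ : Set V), G.Adj v ↑u ∧ u ∈ C.supp}.Subsingleton

/-- `S` is irredundant if it contains no redundant vertex. -/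
def Irredundant (G : SimpleGraph V) (S : Set V) : Prop := ∀ v ∈ S, ¬ Redundant G S v

end VI

namespace VI

/-- `D` is a cluster vertex deletion set of `G` if every connected component of `G − D`
is a complete graph. -/
def IsCVDSet {V : Type*} (G : SimpleGraph V) (D : Set V) : Prop :=
  ∀ C : (G.induce Dᶜ).ConnectedComponent, (G.induce Dᶜ).IsClique C.supp

end VI

open VI SimpleGraph in
/-- If `D` is a cluster vertex deletion set, `C` a largest component of `G − D`, and
`S` a vi-set of `G`, then `|S ∖ V(C)| ≤ |D|`. -/
theorem statement6 {V : Type*} [Fintype V] (G : SimpleGraph V) (D : Set V)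
    (hD : IsCVDSet G D) (C : (G.induce Dᶜ).ConnectedComponent)
    (hC : ∀ C' : (G.induce Dᶜ).ConnectedComponent, C'.supp.ncard ≤ C.supp.ncard)
    (S : Set V) (hS : ∀ S' : Set V, uViCost G S ≤ uViCost G S') :
    (S \ (Subtype.val '' C.supp)).ncard ≤ D.ncard := by
  classical
  set Cv : Set V := Subtype.val '' C.supp with hCvdef
  -- bound on the supremum sets
  have hbdd : ∀ S₀ : Set V,
      BddAbove {n | ∃ K : (G.induce S₀ᶜ).ConnectedComponent, n = K.supp.ncard} := by
    intro S₀
    refine ⟨Fintype.card V, ?_⟩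
    rintro n ⟨K, rfl⟩
    calc K.supp.ncard ≤ (Set.univ : Set ↥(S₀ᶜ)).ncard :=
          Set.ncard_le_ncard (Set.subset_univ _) Set.finite_univ
      _ ≤ Fintype.card V := by
          rw [Set.ncard_univ, Nat.card_eq_fintype_card]
          exact Fintype.card_subtype_le _
  -- uCompMax G D ≤ |C|
  have h1 : uCompMax G D ≤ C.supp.ncard := by
    refine csSup_le ⟨C.supp.ncard, C, rfl⟩ ?_
    rintro n ⟨K, rfl⟩
    exact hC K
  -- (Cv \ S).ncard ≤ uCompMax G S
  have h2 : (Cv \ S).ncard ≤ uCompMax G S := by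
    rcases Set.eq_empty_or_nonempty (Cv \ S) with he | ⟨v, hvC, hvS⟩
    · simp [he]
    · have hvS' : v ∈ Sᶜ := hvS
      set K := (G.induce Sᶜ).connectedComponentMk ⟨v, hvS'⟩ with hK
      have hsub : Cv \ S ⊆ Subtype.val '' K.supp := by
        rintro u ⟨huC, huS⟩
        have huS' : u ∈ Sᶜ := huS
        refine ⟨⟨u, huS'⟩, ?_, rfl⟩
        show (G.induce Sᶜ).connectedComponentMk ⟨u, huS'⟩ = K
        by_cases huv : u = v
        · subst huv; rfl
        · obtain ⟨a, ha, rfl⟩ := huC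
          obtain ⟨b, hb, hbv⟩ := hvC
          have hne : a ≠ b := fun h => huv (by rw [h, hbv])
          have hadj : G.Adj ↑a ↑b := by
            have := hD C ha hb hne
            exact this
          have hadj' : (G.induce Sᶜ).Adj ⟨↑a, huS'⟩ ⟨v, hvS'⟩ := by
            simp only [comap_adj, Function.Embedding.coe_subtype]
            rw [← hbv] at *
            exact hadj
          exact ConnectedComponent.sound hadj'.reachable
      calc (Cv \ S).ncard ≤ (Subtype.val '' K.supp).ncard :=
            Set.ncard_le_ncard hsub (Set.toFinite _)
        _ = K.supp.ncard := Set.ncard_image_of_injective _ Subtype.val_injective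
        _ ≤ uCompMax G S := le_csSup (hbdd S) ⟨K, rfl⟩
  -- main comparison
  have h3 : uViCost G S ≤ D.ncard + Cv.ncard := by
    calc uViCost G S ≤ uViCost G D := hS D
      _ = D.ncard + uCompMax G D := rfl
      _ ≤ D.ncard + C.supp.ncard := by omega
      _ = D.ncard + Cv.ncard := by
          rw [hCvdef, Set.ncard_image_of_injective _ Subtype.val_injective]
  have h4 : S.ncard + (Cv \ S).ncard ≤ D.ncard + Cv.ncard := by
    have : uViCost G S = S.ncard + uCompMax G S := rfl
    omega
  have e1 : (Cv \ S).ncard + S.ncard = (Cv ∪ S).ncard := Set.ncard_diff_add_ncard Cv S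
  have e2 : (S \ Cv).ncard + Cv.ncard = (S ∪ Cv).ncard := Set.ncard_diff_add_ncard S Cv
  rw [Set.union_comm] at e1
  omega
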